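/- The McN hazard rate function h(x) satisfies h(x) ~ (b/σ²) x as x → +∞, i.e., lim_{x→∞} h(x)/x = b/σ². -/

import Mathlib

open Real MeasureTheory Filter Topology

noncomputable def betaFn (a b : ℝ) : ℝ := ∫ t in (0:ℝ)..1, t ^ (a-1) * (1-t) ^ (b-1)

noncomputable def gaussPdf (x : ℝ) : ℝ := (Real.sqrt (2 * Real.pi))⁻¹ * Real.exp (-x^2/2)

noncomputable def stdNormCdf (x : ℝ) : ℝ := ∫ t in Set.Iic x, gaussPdf t

noncomputable def mcNPdf (a b c μ σ x : ℝ) : ℝ :=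
  (c / (betaFn a b * σ)) * gaussPdf ((x - μ)/σ)
    * stdNormCdf ((x - μ)/σ) ^ (a*c - 1)
    * (1 - stdNormCdf ((x - μ)/σ) ^ c) ^ (b - 1)

noncomputable def mcNCdf (a b c μ σ x : ℝ) : ℝ :=
  (1 / betaFn a b) * ∫ t in (0:ℝ)..(stdNormCdf ((x - μ)/σ) ^ c), t ^ (a-1) * (1-t) ^ (b-1)

noncomputable def mcNHazard (a b c μ σ x : ℝ) : ℝ :=
  mcNPdf a b c μ σ x / (1 - mcNCdf a b c μ σ x)

/-! With `z = (x - μ) / σ`, `u = Φ(z)` and `v = u ^ c`, the hazard is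
`c φ(z) u^(ac-1) (1 - v)^(b-1) / (σ ∫_v^1 t^(a-1) (1-t)^(b-1) dt)`,
and `u, v → 1` as `x → ∞`. Two applications of L'Hôpital's rule give the tail asymptotics
`∫_v^1 t^(a-1) (1-t)^(b-1) dt ~ (1-v)^b / b` and Mills' ratio `1 - Φ(z) ~ φ(z) / z`.
Since also `1 - v ~ c (1 - u)`, the hazard is
`~ (b / σ) φ(z) / (1 - Φ(z)) ~ b z / σ ~ b x / σ²`.
A location-scale change reduces everything to `μ = 0`, `σ = 1`. -/

open Set ProbabilityTheory

lemma gaussPdf_eq_gaussianPDFReal : gaussPdf = gaussianPDFReal 0 1 := by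
  ext x
  simp [gaussPdf, gaussianPDFReal]

lemma gaussPdf_pos (x : ℝ) : 0 < gaussPdf x := by
  unfold gaussPdf; positivity

lemma integrable_gaussPdf : Integrable gaussPdf :=
  gaussPdf_eq_gaussianPDFReal ▸ integrable_gaussianPDFReal 0 1

lemma continuous_gaussPdf : Continuous gaussPdf := by
  unfold gaussPdf; fun_prop

lemma hasDerivAt_gaussPdf (x : ℝ) : HasDerivAt gaussPdf (-x * gaussPdf x) x := by
  have h : HasDerivAt (fun y : ℝ => -y ^ 2 / 2) (-x) x :=
    ((hasDerivAt_pow 2 x).fun_neg.div_const 2).congr_deriv (by push_cast; ring)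
  exact (h.exp.const_mul _).congr_deriv (by simp only [gaussPdf]; ring)

lemma tendsto_gaussPdf_atTop : Tendsto gaussPdf atTop (𝓝 0) := by
  show Tendsto (fun x => (√(2 * π))⁻¹ * rexp (-x ^ 2 / 2)) atTop (𝓝 0)
  have h : Tendsto (fun x : ℝ => -x ^ 2 / 2) atTop atBot := by
    simpa only [Function.comp_def, neg_div] using tendsto_neg_atTop_atBot.comp
      ((tendsto_pow_atTop two_ne_zero).atTop_div_const (two_pos : (0:ℝ) < 2))
  simpa only [mul_zero, Function.comp_apply] using
    (tendsto_exp_atBot.comp h).const_mul (√(2 * π))⁻¹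

lemma hasDerivAt_stdNormCdf (x : ℝ) : HasDerivAt stdNormCdf (gaussPdf x) x := by
  have hΦ : stdNormCdf = fun y => stdNormCdf 0 + ∫ t in (0:ℝ)..y, gaussPdf t := by
    ext y
    rw [← intervalIntegral.integral_Iic_sub_Iic integrable_gaussPdf.integrableOn
      integrable_gaussPdf.integrableOn]
    simp [stdNormCdf]
  rw [hΦ]
  exact (intervalIntegral.integral_hasDerivAt_right integrable_gaussPdf.intervalIntegrable
    (continuous_gaussPdf.stronglyMeasurableAtFilter _ _)
    continuous_gaussPdf.continuousAt).const_add _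

lemma strictMono_stdNormCdf : StrictMono stdNormCdf :=
  strictMono_of_hasDerivAt_pos hasDerivAt_stdNormCdf gaussPdf_pos

lemma tendsto_stdNormCdf_atTop : Tendsto stdNormCdf atTop (𝓝 1) := by
  have h := tendsto_setIntegral_of_monotone (μ := volume) (f := gaussPdf) (s := Iic)
    (fun _ => measurableSet_Iic) (fun _ _ hxy => Iic_subset_Iic.2 hxy)
    integrable_gaussPdf.integrableOn
  rwa [iUnion_Iic, setIntegral_univ, gaussPdf_eq_gaussianPDFReal,
    integral_gaussianPDFReal_eq_one 0 one_ne_zero, ← gaussPdf_eq_gaussianPDFReal] at h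

lemma stdNormCdf_mem_Ioo (x : ℝ) : stdNormCdf x ∈ Ioo 0 1 := by
  refine ⟨?_, ?_⟩
  · calc (0:ℝ) ≤ stdNormCdf (x - 1) :=
          setIntegral_nonneg measurableSet_Iic fun t _ => (gaussPdf_pos t).le
      _ < stdNormCdf x := strictMono_stdNormCdf (by linarith)
  · calc stdNormCdf x < stdNormCdf (x + 1) := strictMono_stdNormCdf (by linarith)
      _ ≤ 1 := strictMono_stdNormCdf.monotone.ge_of_tendsto tendsto_stdNormCdf_atTop _

lemma tendsto_gaussPdf_div_mul_one_sub_stdNormCdf :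
    Tendsto (fun z => gaussPdf z / (z * (1 - stdNormCdf z))) atTop (𝓝 1) := by
  have hf : ∀ z ≠ 0, HasDerivAt (fun z => gaussPdf z / z)
      ((-z * gaussPdf z * z - gaussPdf z * 1) / z ^ 2) z :=
    fun z hz => (hasDerivAt_gaussPdf z).div (hasDerivAt_id z) hz
  have hg (z : ℝ) : HasDerivAt (fun z => 1 - stdNormCdf z) (-gaussPdf z) z := by
    simpa using (hasDerivAt_stdNormCdf z).const_sub 1
  have hratio : Tendsto (fun z => (-z * gaussPdf z * z - gaussPdf z * 1) / z ^ 2 / -gaussPdf z)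
      atTop (𝓝 1) := by
    have h : Tendsto (fun z : ℝ => 1 + (z ^ 2)⁻¹) atTop (𝓝 (1 + 0)) :=
      tendsto_const_nhds.add (tendsto_inv_atTop_zero.comp (tendsto_pow_atTop two_ne_zero))
    rw [add_zero] at h
    refine h.congr' ?_
    filter_upwards [eventually_ne_atTop 0] with z hz
    have := (gaussPdf_pos z).ne'
    field_simp
    ring
  have h := HasDerivAt.lhopital_zero_atTop ((eventually_ne_atTop 0).mono hf)
    (.of_forall hg) (.of_forall fun z => neg_ne_zero.2 (gaussPdf_pos z).ne')
    (by simpa [div_eq_mul_inv] using tendsto_gaussPdf_atTop.mul tendsto_inv_atTop_zero)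
    (by simpa using tendsto_stdNormCdf_atTop.const_sub 1) hratio
  simpa only [div_div] using h

noncomputable def betaIntegrand (a b t : ℝ) : ℝ := t ^ (a - 1) * (1 - t) ^ (b - 1)

section Beta

variable {a b : ℝ}

lemma intervalIntegrable_betaIntegrand (ha : 0 < a) (hb : 0 < b) :
    IntervalIntegrable (betaIntegrand a b) volume 0 1 := by
  refine (Complex.betaIntegral_convergent (u := a) (v := b) (by simpa) (by simpa)).norm.congr_uIoo
    fun t ht => ?_
  rw [uIoo_of_le zero_le_one] at ht
  have h1t : 0 < 1 - t := by linarith [ht.2]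
  have h : (1 : ℂ) - t = ((1 - t : ℝ) : ℂ) := by push_cast; ring
  dsimp only
  rw [norm_mul, h, Complex.norm_cpow_eq_rpow_re_of_pos ht.1,
    Complex.norm_cpow_eq_rpow_re_of_pos h1t]
  simp [betaIntegrand]

lemma betaIntegrand_pos {t : ℝ} (ht : t ∈ Ioo 0 1) : 0 < betaIntegrand a b t := by
  have h1t : 0 < 1 - t := by linarith [ht.2]
  have := ht.1
  unfold betaIntegrand
  positivity

lemma betaFn_pos (ha : 0 < a) (hb : 0 < b) : 0 < betaFn a b :=
  intervalIntegral.intervalIntegral_pos_of_pos_on (intervalIntegrable_betaIntegrand ha hb)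
    (fun _ ht => betaIntegrand_pos ht) zero_lt_one

lemma hasDerivAt_integral_betaIntegrand_left (ha : 0 < a) (hb : 0 < b) {v : ℝ}
    (hv : v ∈ Ioo 0 1) :
    HasDerivAt (fun v => ∫ t in v..1, betaIntegrand a b t) (-betaIntegrand a b v) v := by
  have h1v : 0 < 1 - v := by linarith [hv.2]
  have hcont : ContinuousAt (betaIntegrand a b) v :=
    (continuousAt_id.rpow_const (Or.inl hv.1.ne')).mul
      ((continuousAt_const.sub continuousAt_id).rpow_const (Or.inl h1v.ne'))
  have hmeas : Measurable (betaIntegrand a b) := by unfold betaIntegrand; fun_prop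
  exact intervalIntegral.integral_hasDerivAt_left ((intervalIntegrable_betaIntegrand ha hb).mono_set
      (uIcc_subset_uIcc (mem_uIcc_of_le hv.1.le hv.2.le) right_mem_uIcc))
    hmeas.stronglyMeasurable.stronglyMeasurableAtFilter hcont

lemma tendsto_integral_betaIntegrand_nhdsLT_one (ha : 0 < a) (hb : 0 < b) :
    Tendsto (fun v => ∫ t in v..1, betaIntegrand a b t) (𝓝[<] 1) (𝓝 0) := by
  have h := intervalIntegral.continuousOn_primitive_interval_left
    ((intervalIntegrable_iff' (by simp)).mp (intervalIntegrable_betaIntegrand ha hb))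
    1 right_mem_uIcc
  have hsub : Ioo (0:ℝ) 1 ⊆ uIcc 0 1 := by
    rw [uIcc_of_le zero_le_one]; exact Ioo_subset_Icc_self
  simpa using
    (h.mono_of_mem_nhdsWithin (mem_of_superset (Ioo_mem_nhdsLT zero_lt_one) hsub)).tendsto

lemma tendsto_one_sub_rpow_div_integral_betaIntegrand (ha : 0 < a) (hb : 0 < b) :
    Tendsto (fun v => (1 - v) ^ b / ∫ t in v..1, betaIntegrand a b t) (𝓝[<] 1) (𝓝 b) := by
  have hIoo : Ioo (0:ℝ) 1 ∈ 𝓝[<] 1 := Ioo_mem_nhdsLT zero_lt_one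
  have hf (v : ℝ) (hv : v ∈ Ioo 0 1) :
      HasDerivAt (fun v => (1 - v) ^ b) (-1 * b * (1 - v) ^ (b - 1)) v :=
    ((hasDerivAt_id v).const_sub 1).rpow_const (Or.inl (by simp; linarith [hv.2]))
  have hf0 : Tendsto (fun v : ℝ => (1 - v) ^ b) (𝓝[<] 1) (𝓝 0) := by
    have h : ContinuousAt (fun v : ℝ => (1 - v) ^ b) 1 :=
      (continuousAt_const.sub continuousAt_id).rpow_const (Or.inr hb.le)
    simpa [Real.zero_rpow hb.ne'] using h.tendsto.mono_left nhdsWithin_le_nhds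
  have hratio : Tendsto (fun v => -1 * b * (1 - v) ^ (b - 1) / -betaIntegrand a b v)
      (𝓝[<] 1) (𝓝 b) := by
    have h : Tendsto (fun v : ℝ => b / v ^ (a - 1)) (𝓝[<] 1) (𝓝 (b / 1 ^ (a - 1))) :=
      ((continuousAt_const.div (continuousAt_id.rpow_const (Or.inl one_ne_zero))
        (by simp)).tendsto).mono_left nhdsWithin_le_nhds
    rw [Real.one_rpow, div_one] at h
    refine h.congr' (eventually_of_mem hIoo fun v hv => ?_)
    have : 0 < (1 - v) ^ (b - 1) := Real.rpow_pos_of_pos (by linarith [hv.2]) _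
    have : 0 < v ^ (a - 1) := Real.rpow_pos_of_pos hv.1 _
    simp only [betaIntegrand]
    field_simp
  exact HasDerivAt.lhopital_zero_nhdsLT (eventually_of_mem hIoo hf)
    (eventually_of_mem hIoo fun _ hv => hasDerivAt_integral_betaIntegrand_left ha hb hv)
    (eventually_of_mem hIoo fun _ hv => neg_ne_zero.2 (betaIntegrand_pos hv).ne') hf0
    (tendsto_integral_betaIntegrand_nhdsLT_one ha hb) hratio

end Beta

lemma tendsto_one_sub_rpow_div_one_sub (c : ℝ) :
    Tendsto (fun t : ℝ => (1 - t ^ c) / (1 - t)) (𝓝[≠] 1) (𝓝 c) := by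
  have h := (Real.hasDerivAt_rpow_const (x := 1) (p := c) (Or.inl one_ne_zero)).tendsto_slope
  rw [Real.one_rpow, mul_one] at h
  refine h.congr fun t => ?_
  rw [slope_def_field, Real.one_rpow, ← neg_div_neg_eq, neg_sub, neg_sub]

lemma mcNHazard_eq_zero_one (a b c μ σ x : ℝ) :
    mcNHazard a b c μ σ x = mcNHazard a b c 0 1 ((x - μ) / σ) / σ := by
  simp only [mcNHazard, mcNPdf, mcNCdf, sub_zero, div_one, mul_one]
  rw [div_right_comm]
  congr 1
  field_simp

lemma mcNHazard_zero_one_eq {a b c : ℝ} (ha : 0 < a) (hb : 0 < b) (hc : 0 ≤ c) (z : ℝ) :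
    mcNHazard a b c 0 1 z = c * gaussPdf z * stdNormCdf z ^ (a * c - 1)
      * (1 - stdNormCdf z ^ c) ^ (b - 1) / ∫ t in stdNormCdf z ^ c..1, betaIntegrand a b t := by
  obtain ⟨hu0, hu1⟩ := stdNormCdf_mem_Ioo z
  have hv : stdNormCdf z ^ c ∈ uIcc 0 1 :=
    mem_uIcc_of_le (Real.rpow_nonneg hu0.le c) (Real.rpow_le_one hu0.le hu1.le hc)
  have hβ := intervalIntegrable_betaIntegrand ha hb
  have hsplit : (∫ t in 0..stdNormCdf z ^ c, betaIntegrand a b t)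
      + ∫ t in stdNormCdf z ^ c..1, betaIntegrand a b t = betaFn a b :=
    intervalIntegral.integral_add_adjacent_intervals
      (hβ.mono_set (uIcc_subset_uIcc left_mem_uIcc hv))
      (hβ.mono_set (uIcc_subset_uIcc hv right_mem_uIcc))
  have hB := (betaFn_pos ha hb).ne'
  have hcdf : 1 - mcNCdf a b c 0 1 z
      = (∫ t in stdNormCdf z ^ c..1, betaIntegrand a b t) / betaFn a b := by
    simp only [mcNCdf, betaIntegrand, sub_zero, div_one] at hsplit ⊢
    field_simp
    linarith
  rw [mcNHazard, hcdf, mcNPdf]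
  simp only [sub_zero, div_one, mul_one]
  field_simp

lemma tendsto_mcNHazard_zero_one_div_atTop {a b c : ℝ} (ha : 0 < a) (hb : 0 < b) (hc : 0 < c) :
    Tendsto (fun z => mcNHazard a b c 0 1 z / z) atTop (𝓝 b) := by
  have hΦ : Tendsto stdNormCdf atTop (𝓝[<] 1) :=
    tendsto_nhdsWithin_of_tendsto_nhds_of_eventually_within _ tendsto_stdNormCdf_atTop
      (.of_forall fun z => (stdNormCdf_mem_Ioo z).2)
  have hΦpow (p : ℝ) : Tendsto (fun z => stdNormCdf z ^ p) atTop (𝓝 1) := by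
    simpa [Function.comp_def] using
      (Real.continuousAt_rpow_const 1 p (Or.inl one_ne_zero)).tendsto.comp tendsto_stdNormCdf_atTop
  have hv : Tendsto (fun z => stdNormCdf z ^ c) atTop (𝓝[<] 1) :=
    tendsto_nhdsWithin_of_tendsto_nhds_of_eventually_within _ (hΦpow c) (.of_forall fun z =>
      Real.rpow_lt_one (stdNormCdf_mem_Ioo z).1.le (stdNormCdf_mem_Ioo z).2 hc)
  have hslope := (tendsto_one_sub_rpow_div_one_sub c).comp
    (hΦ.mono_right (nhdsWithin_mono _ fun _ ht => ne_of_lt ht))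
  have htail := (tendsto_one_sub_rpow_div_integral_betaIntegrand ha hb).comp hv
  -- `H(z) / z = c u^(ac-1) · φ(z) / (z (1 - u)) · ((1 - v) / (1 - u))⁻¹ · (1 - v)^b / ∫_v^1 β`
  have hlim := ((((hΦpow (a * c - 1)).const_mul c).mul
    tendsto_gaussPdf_div_mul_one_sub_stdNormCdf).mul (hslope.inv₀ hc.ne')).mul htail
  rw [show c * 1 * 1 * c⁻¹ * b = b by field_simp] at hlim
  refine hlim.congr' ?_
  filter_upwards [eventually_gt_atTop 0] with z hz
  obtain ⟨hu0, hu1⟩ := stdNormCdf_mem_Ioo z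
  have hv1 : 0 < 1 - stdNormCdf z ^ c := sub_pos.2 (Real.rpow_lt_one hu0.le hu1 hc)
  have hu1' : 0 < 1 - stdNormCdf z := sub_pos.2 hu1
  have := (gaussPdf_pos z).ne'
  rw [mcNHazard_zero_one_eq ha hb hc.le, Real.rpow_sub_one hv1.ne']
  simp only [Function.comp_apply]
  field_simp

/-- h(x) ~ (b/σ²)x as x → ∞. -/
theorem mcN_hazard_asymptotic_top (a b c μ σ : ℝ)
    (ha : 0 < a) (hb : 0 < b) (hc : 0 < c) (hσ : 0 < σ) :
    Tendsto (fun x => mcNHazard a b c μ σ x / x) atTop (𝓝 (b / σ^2)) := by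
  have hz : Tendsto (fun x => (x - μ) / σ) atTop atTop :=
    (tendsto_atTop_add_const_right _ (-μ) tendsto_id).atTop_div_const hσ
  have hzx : Tendsto (fun x => (x - μ) / σ / x) atTop (𝓝 (1 / σ)) := by
    have h := ((tendsto_inv_atTop_zero.const_mul μ).const_sub 1).div_const σ
    rw [mul_zero, sub_zero] at h
    refine h.congr' ?_
    filter_upwards [eventually_ne_atTop 0] with x hx
    field_simp
  have hlim := (((tendsto_mcNHazard_zero_one_div_atTop ha hb hc).comp hz).mul hzx).div_const σ
  rw [show b * (1 / σ) / σ = b / σ ^ 2 by ring] at hlim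
  refine hlim.congr' ?_
  filter_upwards [eventually_ne_atTop 0, eventually_ne_atTop μ] with x hx hxμ
  have := sub_ne_zero.2 hxμ
  rw [mcNHazard_eq_zero_one, Function.comp_apply]
  field_simp
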